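/- Let R = K[x_1,...,x_n] be the polynomial ring over a field K, let Δ be a simplicial complex on V = {x_1,...,x_n} with Stanley-Reisner ideal I = I_Δ, and let x be a shedding vertex of Δ. If I is unmixed, then (I : x) and (I, x) are unmixed. -/

import Mathlib

open MvPolynomial

/-- An (abstract) simplicial complex on a vertex set `V`: a collection of finite subsets
of `V` containing all singletons and closed under taking subsets. -/
structure SimplicialComplexOn (V : Type) where
  faces : Set (Finset V)
  singleton_mem : ∀ v : V, {v} ∈ faces
  down_closed : ∀ {A B : Finset V}, A ∈ faces → B ⊆ A → B ∈ faces

/-- The deletion of a vertex `x`: all faces not containing `x`. -/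
def SimplicialComplexOn.del {V : Type} (Δ : SimplicialComplexOn V) (x : V) :
    Set (Finset V) :=
  {F | F ∈ Δ.faces ∧ x ∉ F}

/-- The link of a vertex `x`: all faces `F` with `x ∉ F` and `F ∪ {x}` a face. -/
def SimplicialComplexOn.link {V : Type} [DecidableEq V] (Δ : SimplicialComplexOn V) (x : V) :
    Set (Finset V) :=
  {F | x ∉ F ∧ insert x F ∈ Δ.faces}

/-- `F` is a facet (maximal face) of a collection `S` of faces. -/
def IsFacetOf {V : Type} (S : Set (Finset V)) (F : Finset V) : Prop :=
  F ∈ S ∧ ∀ G ∈ S, F ⊆ G → F = G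

/-- `x` is a shedding vertex of `Δ` if no face of `link_Δ(x)` is a facet of `del_Δ(x)`. -/
def SimplicialComplexOn.IsSheddingVertex {V : Type} [DecidableEq V]
    (Δ : SimplicialComplexOn V) (x : V) : Prop :=
  ∀ F ∈ Δ.link x, ¬ IsFacetOf (Δ.del x) F

/-- The Stanley–Reisner ideal of a simplicial complex on `{x_1, …, x_n}`: the ideal
generated by the squarefree monomials corresponding to non-faces. -/
noncomputable def srIdeal (n : ℕ) (K : Type) [Field K] (Δ : SimplicialComplexOn (Fin n)) :
    Ideal (MvPolynomial (Fin n) K) :=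
  Ideal.span {m | ∃ F : Finset (Fin n), F ∉ Δ.faces ∧ m = ∏ v ∈ F, X v}

/-- The height of a (prime) ideal `p`: the Krull dimension of the set of primes
contained in `p`. -/
noncomputable def idealHeight (R : Type) [CommRing R] (p : Ideal R) : WithBot ℕ∞ :=
  Order.krullDim {q : PrimeSpectrum R // q.asIdeal ≤ p}

/-- An ideal is unmixed if all of its associated primes have the same height. -/
def IsUnmixed (R : Type) [CommRing R] (I : Ideal R) : Prop :=
  ∀ p ∈ associatedPrimes R (R ⧸ I), ∀ q ∈ associatedPrimes R (R ⧸ I),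
    idealHeight R p = idealHeight R q

/-!
Writing `P_F` for the prime generated by the variables outside `F`, the Stanley–Reisner ideal
`I_Γ` of a down-closed family `Γ` is `⋂_{F ∈ Γ} P_F`, a finite intersection of primes; its
associated primes are therefore its minimal primes, the `P_F` with `F` maximal in `Γ`.

For any ideal `I`, multiplication by `y` embeds `R ⧸ (I : y)` into `R ⧸ I`, so
`Ass (I : y) ⊆ Ass I` and `(I : x)` inherits unmixedness. On the other hand `I_Δ + (x)` is the
Stanley–Reisner ideal of `del_Δ(x)`, and for a shedding vertex `x` a facet `F` of the deletion
is a facet of `Δ`: otherwise `F ∪ {x}` is a face, i.e. `F` lies in the link. Hence again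
`Ass (I + (x)) ⊆ Ass I`.
-/

section AssociatedPrimes

variable {R : Type*} [CommRing R]

theorem Ideal.bot_colon_quotient_mk (I : Ideal R) (y : R) :
    (⊥ : Submodule R (R ⧸ I)).colon {Ideal.Quotient.mk I y} = I.colon {y} := by
  ext r
  rw [Submodule.mem_colon_singleton, Submodule.mem_colon_singleton, Submodule.mem_bot,
    Algebra.smul_def, Ideal.Quotient.algebraMap_eq, ← map_mul, Ideal.Quotient.eq_zero_iff_mem,
    smul_eq_mul]

theorem associatedPrimes_quotient_colon_subset (I : Ideal R) (y : R) :
    associatedPrimes R (R ⧸ I.colon {y}) ⊆ associatedPrimes R (R ⧸ I) := by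
  set g := LinearMap.toSpanSingleton R (R ⧸ I) (Ideal.Quotient.mk I y)
  have hker : I.colon {y} = LinearMap.ker g := by
    rw [← Ideal.bot_colon_quotient_mk]
    ext r
    rw [Submodule.mem_colon_singleton, Submodule.mem_bot, LinearMap.mem_ker,
      LinearMap.toSpanSingleton_apply]
  rw [hker]
  exact associatedPrimes.subset_of_injective
    (LinearMap.ker_eq_bot.mp ((LinearMap.ker g).ker_liftQ_eq_bot' g rfl))

theorem Ideal.mem_finsetInf_colon_singleton_iff {S : Finset (Ideal R)}
    (hS : ∀ q ∈ S, q.IsPrime) {y r : R} :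
    r ∈ (S.inf id).colon {y} ↔ ∀ q ∈ S, y ∉ q → r ∈ q := by
  simp only [Submodule.mem_colon_singleton, Submodule.mem_finsetInf, id, smul_eq_mul]
  refine forall₂_congr fun q hq => ⟨fun h hy => ?_, fun h => ?_⟩
  · exact ((hS q hq).mem_or_mem h).resolve_right hy
  · by_cases hy : y ∈ q
    · exact q.mul_mem_left r hy
    · exact q.mul_mem_right y (h hy)

theorem mem_associatedPrimes_quotient_finsetInf_iff {S : Finset (Ideal R)}
    (hS : ∀ q ∈ S, q.IsPrime) {p : Ideal R} :
    p ∈ associatedPrimes R (R ⧸ S.inf id) ↔ Minimal (· ∈ S) p := by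
  classical
  constructor
  · rintro ⟨hp, y', hy⟩
    obtain ⟨y, rfl⟩ := Ideal.Quotient.mk_surjective y'
    rw [Ideal.bot_colon_quotient_mk] at hy
    have hle : ∀ q ∈ S, y ∉ q → p ≤ q := fun q hq hyq =>
      hy ▸ (Ideal.radical_mono fun r hr =>
        (Ideal.mem_finsetInf_colon_singleton_iff hS).mp hr q hq hyq).trans_eq (hS q hq).radical
    have hfilter : (S.filter (y ∉ ·)).inf id ≤ p := fun r hr =>
      hy ▸ Ideal.le_radical ((Ideal.mem_finsetInf_colon_singleton_iff hS).mpr fun q hq hyq =>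
        Submodule.mem_finsetInf.mp hr q (Finset.mem_filter.mpr ⟨hq, hyq⟩))
    obtain ⟨q, hq, hqp⟩ := hp.inf_le'.mp hfilter
    obtain ⟨hqS, hyq⟩ := Finset.mem_filter.mp hq
    obtain rfl := le_antisymm (hle q hqS hyq) hqp
    exact ⟨hqS, fun q' hq' hq'p => hle q' hq' fun hyq' => hyq (hq'p hyq')⟩
  · intro hmin
    have hp := hS p hmin.prop
    have hnle : ¬ (S.erase p).inf id ≤ p := fun h => by
      obtain ⟨q, hq, hqp⟩ := hp.inf_le'.mp h
      exact (Finset.mem_erase.mp hq).1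
        (le_antisymm hqp (hmin.le_of_le (Finset.mem_of_mem_erase hq) hqp))
    obtain ⟨y, hy, hyp⟩ := SetLike.not_le_iff_exists.mp hnle
    refine ⟨hp, Ideal.Quotient.mk _ y, ?_⟩
    suffices (S.inf id).colon {y} = p by rw [Ideal.bot_colon_quotient_mk, this, hp.radical]
    ext r
    rw [Ideal.mem_finsetInf_colon_singleton_iff hS]
    refine ⟨fun h => h p hmin.prop hyp, fun hr q hq hyq => ?_⟩
    by_cases hqp : q = p
    · exact hqp ▸ hr
    · exact absurd (Submodule.mem_finsetInf.mp hy q (Finset.mem_erase.mpr ⟨hqp, hq⟩)) hyq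

end AssociatedPrimes

namespace MvPolynomial

variable {σ R : Type*} [CommRing R]

theorem ker_aeval_indicator_compl_X (s : Set σ) :
    RingHom.ker (aeval (sᶜ.indicator X) : MvPolynomial σ R →ₐ[R] MvPolynomial σ R)
      = Ideal.span (X '' s) := by
  set P : Ideal (MvPolynomial σ R) := Ideal.span (X '' s)
  -- killing the variables in `s` does not change a polynomial modulo `P`
  have hmod :
      (Ideal.Quotient.mkₐ R P).comp (aeval (sᶜ.indicator X)) = Ideal.Quotient.mkₐ R P := by
    refine algHom_ext fun v => ?_
    by_cases hv : v ∈ s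
    · rw [AlgHom.comp_apply, aeval_X, Set.indicator_of_notMem (Set.notMem_compl_iff.mpr hv),
        map_zero, eq_comm, Ideal.Quotient.mkₐ_eq_mk, Ideal.Quotient.eq_zero_iff_mem]
      exact Ideal.subset_span ⟨v, hv, rfl⟩
    · rw [AlgHom.comp_apply, aeval_X, Set.indicator_of_mem (Set.mem_compl hv)]
  refine le_antisymm (fun f hf => ?_) (Ideal.span_le.mpr ?_)
  · rw [← Ideal.Quotient.eq_zero_iff_mem, ← Ideal.Quotient.mkₐ_eq_mk R, ← hmod,
      AlgHom.comp_apply, RingHom.mem_ker.mp hf, map_zero]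
  · rintro _ ⟨v, hv, rfl⟩
    rw [SetLike.mem_coe, RingHom.mem_ker, aeval_X,
      Set.indicator_of_notMem (Set.notMem_compl_iff.mpr hv)]

theorem isPrime_span_X_image [IsDomain R] (s : Set σ) :
    (Ideal.span (X '' s) : Ideal (MvPolynomial σ R)).IsPrime := by
  rw [← ker_aeval_indicator_compl_X]
  exact RingHom.ker_isPrime _

theorem X_mem_span_X_image_iff [Nontrivial R] {s : Set σ} {v : σ} :
    (X v : MvPolynomial σ R) ∈ Ideal.span (X '' s) ↔ v ∈ s := by
  refine ⟨fun h => by_contra fun hv => X_ne_zero (R := R) v ?_,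
    fun hv => Ideal.subset_span ⟨v, hv, rfl⟩⟩
  rwa [← ker_aeval_indicator_compl_X, RingHom.mem_ker, aeval_X,
    Set.indicator_of_mem (Set.mem_compl hv)] at h

theorem span_X_image_le_span_X_image_iff [Nontrivial R] {s t : Set σ} :
    (Ideal.span (X '' s) : Ideal (MvPolynomial σ R)) ≤ Ideal.span (X '' t) ↔ s ⊆ t :=
  ⟨fun h v hv => X_mem_span_X_image_iff.mp (h (Ideal.subset_span ⟨v, hv, rfl⟩)),
    fun h => Ideal.span_mono (Set.image_mono h)⟩

end MvPolynomial

section StanleyReisner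

variable {σ : Type*} (R : Type*) [CommRing R]

noncomputable def facePrime (G : Finset σ) : Ideal (MvPolynomial σ R) :=
  Ideal.span (X '' (↑G)ᶜ)

noncomputable def nonfaceIdeal (Γ : Set (Finset σ)) : Ideal (MvPolynomial σ R) :=
  Ideal.span {m | ∃ F, F ∉ Γ ∧ m = ∏ v ∈ F, X v}

variable {R}

theorem facePrime_isPrime [IsDomain R] (G : Finset σ) : (facePrime R G).IsPrime :=
  isPrime_span_X_image _

theorem facePrime_le_facePrime_iff [Nontrivial R] {G H : Finset σ} :
    facePrime R G ≤ facePrime R H ↔ H ⊆ G := by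
  rw [facePrime, facePrime, span_X_image_le_span_X_image_iff, Set.compl_subset_compl,
    Finset.coe_subset]

theorem prod_X_support_dvd_monomial (m : σ →₀ ℕ) (c : R) :
    (∏ v ∈ m.support, (X v : MvPolynomial σ R)) ∣ monomial m c := by
  rw [monomial_eq, Finsupp.prod]
  exact dvd_mul_of_dvd_right
    (Finset.prod_dvd_prod_of_dvd _ _ fun v hv => dvd_pow_self _ (Finsupp.mem_support_iff.mp hv)) _

theorem mem_nonfaceIdeal_iff {Γ : Set (Finset σ)} (hΓ : IsLowerSet Γ)
    {f : MvPolynomial σ R} : f ∈ nonfaceIdeal R Γ ↔ ∀ G ∈ Γ, f ∈ facePrime R G := by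
  refine ⟨fun hf G hG => ?_, fun hf => ?_⟩
  · refine (Ideal.span_le.mpr ?_) hf
    rintro _ ⟨F, hF, rfl⟩
    obtain ⟨v, hvF, hvG⟩ := Finset.not_subset.mp fun hFG : F ⊆ G => hF (hΓ hFG hG)
    exact Ideal.mem_of_dvd _ (Finset.dvd_prod_of_mem _ hvF) (Ideal.subset_span ⟨v, hvG, rfl⟩)
  · rw [f.as_sum]
    refine Ideal.sum_mem _ fun m hm => ?_
    have hnonface : m.support ∉ Γ := fun hG => by
      obtain ⟨v, hv, hmv⟩ := mem_ideal_span_X_image.mp (hf _ hG) m hm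
      exact hv (Finsupp.mem_support_iff.mpr hmv)
    exact Ideal.mem_of_dvd _ (prod_X_support_dvd_monomial m _)
      (Ideal.subset_span ⟨m.support, hnonface, rfl⟩)

theorem mem_associatedPrimes_nonfaceIdeal_iff [IsDomain R] [Finite σ] {Γ : Set (Finset σ)}
    (hΓ : IsLowerSet Γ) {p : Ideal (MvPolynomial σ R)} :
    p ∈ associatedPrimes (MvPolynomial σ R) (MvPolynomial σ R ⧸ nonfaceIdeal R Γ) ↔
      ∃ G, Maximal (· ∈ Γ) G ∧ facePrime R G = p := by
  set S := (Set.toFinite (facePrime R '' Γ)).toFinset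
  have hS : nonfaceIdeal R Γ = S.inf id := by
    ext f
    simp [mem_nonfaceIdeal_iff hΓ, Submodule.mem_finsetInf, S]
  have hmem : ∀ q, q ∈ S ↔ q ∈ facePrime R '' Γ := fun q => Set.Finite.mem_toFinset _
  have hanti : ∀ ⦃G H⦄, G ∈ Γ → H ∈ Γ →
      (facePrime R G ≤ facePrime R H ↔ H ⊆ G) := fun _ _ _ _ => facePrime_le_facePrime_iff
  rw [hS, mem_associatedPrimes_quotient_finsetInf_iff fun q hq => ?_]
  · simp only [hmem]
    refine ⟨fun h => ?_, ?_⟩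
    · obtain ⟨G, hG, rfl⟩ := h.prop
      exact ⟨G, (minimal_mem_image_antitone_iff hG hanti).mp h, rfl⟩
    · rintro ⟨G, hG, rfl⟩
      exact (minimal_mem_image_antitone_iff hG.prop hanti).mpr hG
  · obtain ⟨G, -, rfl⟩ := (hmem q).mp hq
    exact facePrime_isPrime G

theorem nonfaceIdeal_sup_span_X (Γ : Set (Finset σ)) (x : σ) :
    nonfaceIdeal R Γ ⊔ Ideal.span {X x} = nonfaceIdeal R {F | F ∈ Γ ∧ x ∉ F} := by
  refine le_antisymm (sup_le (Ideal.span_mono ?_) ?_) (Ideal.span_le.mpr ?_)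
  · rintro _ ⟨F, hF, rfl⟩
    exact ⟨F, fun h => hF h.1, rfl⟩
  · refine Ideal.span_le.mpr (Set.singleton_subset_iff.mpr (Ideal.subset_span ⟨{x}, ?_, ?_⟩))
    · exact fun h => h.2 (Finset.mem_singleton_self x)
    · rw [Finset.prod_singleton]
  · rintro _ ⟨F, hF, rfl⟩
    by_cases hxF : x ∈ F
    · exact Ideal.mem_sup_right (Ideal.mem_span_singleton.mpr (Finset.dvd_prod_of_mem _ hxF))
    · exact Ideal.mem_sup_left (Ideal.subset_span ⟨F, fun hFΓ => hF ⟨hFΓ, hxF⟩, rfl⟩)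

end StanleyReisner

namespace SimplicialComplexOn

variable {V : Type}

theorem isLowerSet_faces (Δ : SimplicialComplexOn V) : IsLowerSet Δ.faces :=
  fun _ _ hBA hA => Δ.down_closed hA hBA

theorem isLowerSet_del (Δ : SimplicialComplexOn V) (x : V) : IsLowerSet (Δ.del x) :=
  Δ.isLowerSet_faces.inter fun _ _ hBA hA hxB => hA (hBA hxB)

theorem IsSheddingVertex.maximal_of_maximal_del [DecidableEq V] {Δ : SimplicialComplexOn V}
    {x : V} (hx : Δ.IsSheddingVertex x) {G : Finset V} (hG : Maximal (· ∈ Δ.del x) G) :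
    Maximal (· ∈ Δ.faces) G := by
  have hfacet : IsFacetOf (Δ.del x) G :=
    ⟨hG.prop, fun H hH hGH => le_antisymm hGH (hG.le_of_ge hH hGH)⟩
  have hcone : insert x G ∉ Δ.faces := fun h => hx G ⟨hG.prop.2, h⟩ hfacet
  refine ⟨hG.prop.1, fun H hH hGH => hG.le_of_ge ⟨hH, fun hxH => hcone ?_⟩ hGH⟩
  exact Δ.down_closed hH (Finset.insert_subset hxH hGH)

end SimplicialComplexOn

theorem srIdeal_eq_nonfaceIdeal (n : ℕ) (K : Type) [Field K] (Δ : SimplicialComplexOn (Fin n)) :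
    srIdeal n K Δ = nonfaceIdeal K Δ.faces :=
  rfl

theorem srIdeal_sup_span_X {n : ℕ} {K : Type} [Field K] (Δ : SimplicialComplexOn (Fin n))
    (x : Fin n) : srIdeal n K Δ ⊔ Ideal.span {X x} = nonfaceIdeal K (Δ.del x) :=
  nonfaceIdeal_sup_span_X Δ.faces x

theorem IsUnmixed.of_associatedPrimes_subset {R : Type} [CommRing R] {I J : Ideal R}
    (hI : IsUnmixed R I) (h : associatedPrimes R (R ⧸ J) ⊆ associatedPrimes R (R ⧸ I)) :
    IsUnmixed R J :=
  fun p hp q hq => hI p (h hp) q (h hq)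

/-- If `I = I_Δ` is the Stanley–Reisner ideal of a simplicial complex `Δ` on
`{x_1, …, x_n}`, `x` is a shedding vertex of `Δ`, and `I` is unmixed, then
`(I : x)` and `(I, x)` are unmixed. -/
theorem unmixed_colon_and_sup_of_shedding (n : ℕ) (K : Type) [Field K]
    (Δ : SimplicialComplexOn (Fin n)) (x : Fin n) (hx : Δ.IsSheddingVertex x)
    (I : Ideal (MvPolynomial (Fin n) K)) (hI : I = srIdeal n K Δ)
    (hunm : IsUnmixed (MvPolynomial (Fin n) K) I) :
    IsUnmixed (MvPolynomial (Fin n) K) (I.colon ((Ideal.span {X x} : Ideal (MvPolynomial (Fin n) K)) : Set (MvPolynomial (Fin n) K))) ∧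
      IsUnmixed (MvPolynomial (Fin n) K) (I ⊔ Ideal.span {X x}) := by
  subst hI
  refine ⟨IsUnmixed.of_associatedPrimes_subset hunm ?_,
    IsUnmixed.of_associatedPrimes_subset hunm ?_⟩
  · rw [Ideal.colon_span]
    exact associatedPrimes_quotient_colon_subset _ (X x)
  · intro p hp
    rw [srIdeal_sup_span_X, mem_associatedPrimes_nonfaceIdeal_iff (Δ.isLowerSet_del x)] at hp
    obtain ⟨G, hG, rfl⟩ := hp
    rw [srIdeal_eq_nonfaceIdeal, mem_associatedPrimes_nonfaceIdeal_iff Δ.isLowerSet_faces]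
    exact ⟨G, hx.maximal_of_maximal_del hG, rfl⟩
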